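/- arXiv:alg-geom/9610001 — 4 statements merged into one kernel-verified Lean document; each statement's English description precedes it below -/
import Mathlib

section
/- Let G and G′ be finite subgroups of SL(3,ℂ) with G normal in G′, T ∈ G, and ω₃·1 ∉ G. Then every diagonal matrix x ∈ G′ with x³ = 1 is scalar; more precisely, x ∈ {1, ω₃·1, ω₃²·1}. (Claim 'order3' of the paper's Lemma on exact sequences 1 → G_η → G′ → C′ → 1 of finite SL(3) subgroups.) -/
open Matrix

noncomputable section

/-- The cyclic permutation matrix `T` as an element of `SL(3, ℂ)`. -/
def T3 : Matrix.SpecialLinearGroup (Fin 3) ℂ :=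
  ⟨!![0, 1, 0; 0, 0, 1; 1, 0, 0], by simp [Matrix.det_fin_three]⟩

/-- `ω₃ = e^{2πi/3}`, a primitive cube root of unity. -/
def ω3 : ℂ := Complex.exp (2 * Real.pi * Complex.I / 3)

lemma ω3_pow_three : ω3 ^ 3 = 1 := by
  unfold ω3
  rw [← Complex.exp_nat_mul]
  rw [show ((3 : ℕ) : ℂ) * (2 * Real.pi * Complex.I / 3) = 2 * Real.pi * Complex.I by
    push_cast; ring]
  exact Complex.exp_two_pi_mul_I

/-- The scalar matrix `ω₃·1` as an element of `SL(3, ℂ)`. -/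
def ω3SL : Matrix.SpecialLinearGroup (Fin 3) ℂ :=
  ⟨ω3 • (1 : Matrix (Fin 3) (Fin 3) ℂ), by
    simp [Matrix.det_smul, ω3_pow_three]⟩

/-! ### Auxiliary lemmas -/

lemma ω3_ne_zero : ω3 ≠ 0 := Complex.exp_ne_zero _

lemma ω3_ne_one : ω3 ≠ 1 := by
  intro h
  rw [ω3, Complex.exp_eq_one_iff] at h
  obtain ⟨n, hn⟩ := h
  have hπ : (Real.pi : ℂ) ≠ 0 := by exact_mod_cast Real.pi_ne_zero
  have hI := Complex.I_ne_zero
  field_simp at hn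
  have h3 : ((3 * n : ℤ) : ℂ) = ((1 : ℤ) : ℂ) := by
    push_cast
    have h2 : (2 * (Real.pi : ℂ) * Complex.I) ≠ 0 := by
      simp [hπ, hI]
    have := mul_right_cancel₀ h2 (show ((3 : ℂ) * n) * (2 * (Real.pi : ℂ) * Complex.I)
        = 1 * (2 * (Real.pi : ℂ) * Complex.I) by linear_combination -(2 * (Real.pi : ℂ) * Complex.I) * hn)
    linear_combination this
  have h4 : (3 * n : ℤ) = 1 := Int.cast_injective (α := ℂ) h3
  omega

lemma ω3_quad : ω3 ^ 2 + ω3 + 1 = 0 := by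
  have h := ω3_pow_three
  have hne : ω3 - 1 ≠ 0 := sub_ne_zero.mpr ω3_ne_one
  have hmul : (ω3 - 1) * (ω3 ^ 2 + ω3 + 1) = 0 := by linear_combination h
  rcases mul_eq_zero.mp hmul with h' | h'
  · exact absurd h' hne
  · exact h'

lemma cube_root (z : ℂ) (h : z ^ 3 = 1) : z = 1 ∨ z = ω3 ∨ z = ω3 ^ 2 := by
  have key : (z - 1) * ((z - ω3) * (z - ω3 ^ 2)) = 0 := by
    linear_combination h + (z - z ^ 2) * ω3_quad + (z - 1) * ω3_pow_three
  rcases mul_eq_zero.mp key with h' | h'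
  · exact Or.inl (sub_eq_zero.mp h')
  · rcases mul_eq_zero.mp h' with h'' | h''
    · exact Or.inr (Or.inl (sub_eq_zero.mp h''))
    · exact Or.inr (Or.inr (sub_eq_zero.mp h''))

/-- A diagonal element of `SL(3, ℂ)`. -/
def dSL (u v w : ℂ) (h : u * v * w = 1) : Matrix.SpecialLinearGroup (Fin 3) ℂ :=
  ⟨!![u,0,0;0,v,0;0,0,w], by simp [Matrix.det_fin_three]; linear_combination h⟩

lemma coe_dSL (u v w : ℂ) (h : u * v * w = 1) :
    (dSL u v w h : Matrix (Fin 3) (Fin 3) ℂ) = !![u,0,0;0,v,0;0,0,w] := rfl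

lemma coe_T3 : (T3 : Matrix (Fin 3) (Fin 3) ℂ) = !![0,1,0;0,0,1;1,0,0] := rfl

lemma coe_ω3SL : (ω3SL : Matrix (Fin 3) (Fin 3) ℂ) = ω3 • 1 := rfl

lemma pow_diag (u v w : ℂ) (n : ℕ) :
    (!![u,0,0;0,v,0;0,0,w] : Matrix (Fin 3) (Fin 3) ℂ) ^ n
      = !![u^n,0,0;0,v^n,0;0,0,w^n] := by
  induction n with
  | zero => simp [pow_zero, Matrix.one_fin_three]
  | succ n ih =>
      rw [pow_succ, ih, Matrix.mul_fin_three]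
      norm_num [pow_succ]

/-- If two suitable diagonal matrices lie in `G`, whose entries allow building `ω₃·1`
as a product of their powers, then `ω₃·1 ∈ G`, a contradiction with `hω`. -/
lemma aux_false (G : Subgroup (Matrix.SpecialLinearGroup (Fin 3) ℂ)) (hω : ω3SL ∉ G)
    (u v w : ℂ) (huvw : u * v * w = 1) (hvwu : v * w * u = 1)
    (hdd : dSL u v w huvw ∈ G) (hss : dSL v w u hvwu ∈ G) (α β : ℕ)
    (h1 : u ^ α * v ^ β = ω3) (h2 : v ^ α * w ^ β = ω3) (h3 : w ^ α * u ^ β = ω3) : False := by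
  apply hω
  have key : ω3SL = dSL u v w huvw ^ α * dSL v w u hvwu ^ β := by
    apply Subtype.ext
    rw [Matrix.SpecialLinearGroup.coe_mul, Matrix.SpecialLinearGroup.coe_pow,
      Matrix.SpecialLinearGroup.coe_pow, coe_dSL, coe_dSL, coe_ω3SL,
      pow_diag, pow_diag, Matrix.mul_fin_three, Matrix.one_fin_three]
    norm_num [h1, h2, h3, Matrix.smul_cons, Matrix.smul_empty]
  rw [key]; exact mul_mem (pow_mem hdd α) (pow_mem hss β)

/-- The commutator of a diagonal cube-root matrix with `T3` is an explicit diagonal matrix. -/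
lemma conj_dd (a b c : ℂ) (ha : a ^ 3 = 1) (hb : b ^ 3 = 1) (hc : c ^ 3 = 1)
    (x : Matrix.SpecialLinearGroup (Fin 3) ℂ)
    (hxm : (x : Matrix (Fin 3) (Fin 3) ℂ) = !![a,0,0;0,b,0;0,0,c])
    (huvw : (a*b^2) * (b*c^2) * (c*a^2) = 1) :
    dSL (a*b^2) (b*c^2) (c*a^2) huvw = x * T3 * x⁻¹ * T3⁻¹ := by
  have h1 : dSL (a*b^2) (b*c^2) (c*a^2) huvw * (T3 * x) = x * T3 := by
    apply Subtype.ext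
    rw [Matrix.SpecialLinearGroup.coe_mul, Matrix.SpecialLinearGroup.coe_mul,
      Matrix.SpecialLinearGroup.coe_mul, coe_dSL, coe_T3, hxm,
      Matrix.mul_fin_three, Matrix.mul_fin_three, Matrix.mul_fin_three]
    ext i j
    fin_cases i <;> fin_cases j <;>
      simp <;>
      first
        | linear_combination a * hb
        | linear_combination b * hc
        | linear_combination c * ha
  rw [← h1]; group

/-- Conjugating a diagonal matrix by `T3` cyclically permutes the entries. -/
lemma conj_ss (u v w : ℂ) (huvw : u * v * w = 1) (hvwu : v * w * u = 1) :
    dSL v w u hvwu = T3 * dSL u v w huvw * T3⁻¹ := by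
  have h1 : dSL v w u hvwu * T3 = T3 * dSL u v w huvw := by
    apply Subtype.ext
    rw [Matrix.SpecialLinearGroup.coe_mul, Matrix.SpecialLinearGroup.coe_mul,
      coe_dSL, coe_dSL, coe_T3, Matrix.mul_fin_three, Matrix.mul_fin_three]
    norm_num
  rw [← h1]; group

/-- if `G` and `G'` are finite subgroups of `SL(3,ℂ)` with `G` normal in `G'`,
`T ∈ G` and `ω₃·1 ∉ G`, then every diagonal `x ∈ G'` with `x³ = 1` lies in
`{1, ω₃·1, ω₃²·1}` (in particular it is scalar). -/
theorem diagonal_cube_root_in_normalizing_group_is_scalar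
    (G G' : Subgroup (Matrix.SpecialLinearGroup (Fin 3) ℂ))
    (hGfin : Finite G) (hG'fin : Finite G')
    (hle : G ≤ G')
    (hnormal : ∀ g ∈ G, ∀ h ∈ G', h * g * h⁻¹ ∈ G)
    (hT : T3 ∈ G) (hω : ω3SL ∉ G)
    (x : Matrix.SpecialLinearGroup (Fin 3) ℂ) (hx : x ∈ G')
    (hdiag : ∀ i j, i ≠ j → (x : Matrix (Fin 3) (Fin 3) ℂ) i j = 0)
    (hx3 : x ^ 3 = 1) :
    x = 1 ∨ x = ω3SL ∨ x = ω3SL ^ 2 := by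
  set M := Matrix (Fin 3) (Fin 3) ℂ
  set a := (x : M) 0 0 with ha_def
  set b := (x : M) 1 1 with hb_def
  set c := (x : M) 2 2 with hc_def
  have hxm : (x : M) = !![a, 0, 0; 0, b, 0; 0, 0, c] := by
    ext i j
    fin_cases i <;> fin_cases j <;> simp [ha_def, hb_def, hc_def] <;> apply hdiag <;> decide
  have hx3m : (x : M) ^ 3 = 1 := by
    have := congrArg (fun y : Matrix.SpecialLinearGroup (Fin 3) ℂ => (y : M)) hx3
    simpa using this
  rw [hxm, pow_diag] at hx3m
  have ha : a ^ 3 = 1 := by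
    have := congrFun (congrFun hx3m 0) 0; simpa [Matrix.one_fin_three] using this
  have hb : b ^ 3 = 1 := by
    have := congrFun (congrFun hx3m 1) 1; simpa [Matrix.one_fin_three] using this
  have hc : c ^ 3 = 1 := by
    have := congrFun (congrFun hx3m 2) 2; simpa [Matrix.one_fin_three] using this
  have huvw : a * b ^ 2 * (b * c ^ 2) * (c * a ^ 2) = 1 := by
    linear_combination b ^ 3 * c ^ 3 * ha + c ^ 3 * hb + hc
  have hvwu : b * c ^ 2 * (c * a ^ 2) * (a * b ^ 2) = 1 := by linear_combination huvw
  have hu3 : (a * b ^ 2) ^ 3 = 1 := by linear_combination b ^ 6 * ha + (b ^ 3 + 1) * hb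
  have hv3 : (b * c ^ 2) ^ 3 = 1 := by linear_combination c ^ 6 * hb + (c ^ 3 + 1) * hc
  have hD := conj_dd a b c ha hb hc x hxm huvw
  have hddG : dSL (a * b ^ 2) (b * c ^ 2) (c * a ^ 2) huvw ∈ G := by
    rw [hD]; exact G.mul_mem (hnormal T3 hT x hx) (G.inv_mem hT)
  have hS := conj_ss (a * b ^ 2) (b * c ^ 2) (c * a ^ 2) huvw hvwu
  have hssG : dSL (b * c ^ 2) (c * a ^ 2) (a * b ^ 2) hvwu ∈ G := by
    rw [hS]; exact G.mul_mem (G.mul_mem hT hddG) (G.inv_mem hT)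
  have fin3 := fun (α β : ℕ) h1 h2 h3 =>
    aux_false G hω (a * b ^ 2) (b * c ^ 2) (c * a ^ 2) huvw hvwu hddG hssG α β h1 h2 h3
  have h3ω := ω3_pow_three
  rcases cube_root _ hu3 with hu | hu | hu <;> rcases cube_root _ hv3 with hv | hv | hv
  · -- u = 1, v = 1 : x is scalar
    have hab : a = b := by linear_combination b * hu - a * hb
    have hbc : b = c := by linear_combination c * hv - b * hc
    have hac : a = c := hab.trans hbc
    rcases cube_root a ha with h | h | h
    · left
      apply Subtype.ext
      rw [hxm, ← hab, ← hac, h, Matrix.SpecialLinearGroup.coe_one, Matrix.one_fin_three]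
    · right; left
      apply Subtype.ext
      rw [hxm, ← hab, ← hac, h, coe_ω3SL]
      ext i j
      fin_cases i <;> fin_cases j <;>
        simp [Matrix.one_apply, Matrix.vecHead, Matrix.vecTail]
    · right; right
      apply Subtype.ext
      rw [hxm, ← hab, ← hac, h, Matrix.SpecialLinearGroup.coe_pow, coe_ω3SL, smul_pow, one_pow]
      ext i j
      fin_cases i <;> fin_cases j <;>
        simp [Matrix.one_apply, Matrix.vecHead, Matrix.vecTail]
  · -- (1, ω, ω²)
    exfalso
    rw [hu, hv] at huvw
    have hw : c * a ^ 2 = ω3 ^ 2 := by linear_combination ω3 ^ 2 * huvw - (c * a ^ 2) * h3ω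
    exact fin3 2 1
      (by simp only [hu, hv, hw]; first | linear_combination ω3 * h3ω | norm_num)
      (by simp only [hu, hv, hw]; first | linear_combination ω3 * h3ω | norm_num)
      (by simp only [hu, hv, hw]; first | linear_combination ω3 * h3ω | norm_num)
  · -- (1, ω², ω)
    exfalso
    rw [hu, hv] at huvw
    have hw : c * a ^ 2 = ω3 := by linear_combination ω3 * huvw - (c * a ^ 2) * h3ω
    exact fin3 1 2
      (by simp only [hu, hv, hw]; first | linear_combination ω3 * h3ω | norm_num)
      (by simp only [hu, hv, hw]; first | linear_combination ω3 * h3ω | norm_num)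
      (by simp only [hu, hv, hw]; first | linear_combination ω3 * h3ω | norm_num)
  · -- (ω, 1, ω²)
    exfalso
    rw [hu, hv] at huvw
    have hw : c * a ^ 2 = ω3 ^ 2 := by linear_combination ω3 ^ 2 * huvw - (c * a ^ 2) * h3ω
    exact fin3 1 2
      (by simp only [hu, hv, hw]; first | linear_combination ω3 * h3ω | norm_num)
      (by simp only [hu, hv, hw]; first | linear_combination ω3 * h3ω | norm_num)
      (by simp only [hu, hv, hw]; first | linear_combination ω3 * h3ω | norm_num)
  · -- (ω, ω, ω)
    exfalso
    rw [hu, hv] at huvw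
    have hw : c * a ^ 2 = ω3 := by linear_combination ω3 * huvw - (c * a ^ 2) * h3ω
    exact fin3 1 0
      (by simp only [hu, hv, hw]; first | linear_combination ω3 * h3ω | norm_num)
      (by simp only [hu, hv, hw]; first | linear_combination ω3 * h3ω | norm_num)
      (by simp only [hu, hv, hw]; first | linear_combination ω3 * h3ω | norm_num)
  · -- (ω, ω², 1)
    exfalso
    rw [hu, hv] at huvw
    have hw : c * a ^ 2 = 1 := by linear_combination huvw - (c * a ^ 2) * h3ω
    exact fin3 2 1
      (by simp only [hu, hv, hw]; first | linear_combination ω3 * h3ω | norm_num)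
      (by simp only [hu, hv, hw]; first | linear_combination ω3 * h3ω | norm_num)
      (by simp only [hu, hv, hw]; first | linear_combination ω3 * h3ω | norm_num)
  · -- (ω², 1, ω)
    exfalso
    rw [hu, hv] at huvw
    have hw : c * a ^ 2 = ω3 := by linear_combination ω3 * huvw - (c * a ^ 2) * h3ω
    exact fin3 2 1
      (by simp only [hu, hv, hw]; first | linear_combination ω3 * h3ω | norm_num)
      (by simp only [hu, hv, hw]; first | linear_combination ω3 * h3ω | norm_num)
      (by simp only [hu, hv, hw]; first | linear_combination ω3 * h3ω | norm_num)
  · -- (ω², ω, 1)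
    exfalso
    rw [hu, hv] at huvw
    have hw : c * a ^ 2 = 1 := by linear_combination huvw - (c * a ^ 2) * h3ω
    exact fin3 1 2
      (by simp only [hu, hv, hw]; first | linear_combination ω3 * h3ω | norm_num)
      (by simp only [hu, hv, hw]; first | linear_combination ω3 * h3ω | norm_num)
      (by simp only [hu, hv, hw]; first | linear_combination ω3 * h3ω | norm_num)
  · -- (ω², ω², ω²)
    exfalso
    rw [hu, hv] at huvw
    have hw : c * a ^ 2 = ω3 ^ 2 := by
      linear_combination ω3 ^ 2 * huvw - (c * a ^ 2) * (ω3 ^ 3 + 1) * h3ω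
    exact fin3 2 0
      (by simp only [hu, hv, hw]; first | linear_combination ω3 * h3ω | norm_num)
      (by simp only [hu, hv, hw]; first | linear_combination ω3 * h3ω | norm_num)
      (by simp only [hu, hv, hw]; first | linear_combination ω3 * h3ω | norm_num)

end
end

section
/- Let G be a finite subgroup of SL(3,ℂ) containing the cyclic permutation matrix T and not containing the scalar matrix ω₃·1. Then every diagonal element of G has order coprime to 3. (Consequence of Claim 'order3': all elements of the diagonal subgroup H_η of G_η have orders prime to 3.) -/
open Matrix

noncomputable section

lemma cube_root_cases (t : ℂ) (h3 : t ^ 3 = 1) (h1 : t ≠ 1) : t = ω3 ∨ t = ω3 ^ 2 := by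
  have hsum : ω3 ^ 2 + ω3 + 1 = 0 := by
    have h : (ω3 - 1) * (ω3 ^ 2 + ω3 + 1) = 0 := by
      linear_combination ω3_pow_three
    rcases mul_eq_zero.mp h with h | h
    · exact absurd (by linear_combination h) ω3_ne_one
    · exact h
  have ht : (t - ω3) * (t - ω3 ^ 2) = 0 := by
    have h : (t - 1) * (t ^ 2 + t + 1) = 0 := by linear_combination h3
    rcases mul_eq_zero.mp h with h | h
    · exact absurd (by linear_combination h) h1
    · linear_combination h - t * hsum + ω3_pow_three
  rcases mul_eq_zero.mp ht with h | h
  · exact Or.inl (by linear_combination h)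
  · exact Or.inr (by linear_combination h)

lemma diag_eq_smul_one (f : Fin 3 → ℂ) (s : ℂ) (h : ∀ i, f i = s) :
    Matrix.diagonal f = s • (1 : Matrix (Fin 3) (Fin 3) ℂ) := by
  ext i j
  by_cases hij : i = j
  · subst hij; simp [h i]
  · simp [Matrix.diagonal_apply_ne _ hij, Matrix.one_apply_ne hij]

lemma T3_conj_diag (e : Fin 3 → ℂ) :
    (T3 : Matrix (Fin 3) (Fin 3) ℂ) * Matrix.diagonal e *
      ((T3 : Matrix (Fin 3) (Fin 3) ℂ) * (T3 : Matrix (Fin 3) (Fin 3) ℂ)) =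
    Matrix.diagonal ![e 1, e 2, e 0] := by
  ext i j
  fin_cases i <;> fin_cases j <;>
    simp [T3, Matrix.mul_apply, Fin.sum_univ_three, Matrix.diagonal_apply,
      Matrix.vecMul_diagonal, Matrix.vecHead, Matrix.vecTail]

/-- if `G` is a finite subgroup of `SL(3,ℂ)` containing `T` and not
containing `ω₃·1`, then every diagonal element of `G` has order coprime to `3`. -/
theorem orderOf_diagonal_coprime_three
    (G : Subgroup (Matrix.SpecialLinearGroup (Fin 3) ℂ)) (hGfin : Finite G)
    (hT : T3 ∈ G) (hω : ω3SL ∉ G)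
    (x : Matrix.SpecialLinearGroup (Fin 3) ℂ) (hx : x ∈ G)
    (hdiag : ∀ i j, i ≠ j → (x : Matrix (Fin 3) (Fin 3) ℂ) i j = 0) :
    Nat.Coprime (orderOf x) 3 := by
  have hnpos : 0 < orderOf x := by
    have h1 : orderOf (G.subtype ⟨x, hx⟩) = orderOf (⟨x, hx⟩ : G) :=
      orderOf_injective G.subtype G.subtype_injective _
    have h2 : G.subtype ⟨x, hx⟩ = x := rfl
    rw [h2] at h1
    rw [h1]
    exact orderOf_pos _
  set n := orderOf x with hn
  rw [Nat.coprime_comm, Nat.Prime.coprime_iff_not_dvd Nat.prime_three]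
  intro hdvd
  obtain ⟨d, hxd⟩ : ∃ d, (x : Matrix (Fin 3) (Fin 3) ℂ) = Matrix.diagonal d := by
    refine ⟨fun i => (x : Matrix (Fin 3) (Fin 3) ℂ) i i, ?_⟩
    ext i j
    by_cases h : i = j
    · subst h; simp
    · simp [Matrix.diagonal_apply_ne _ h, hdiag i j h]
  set y := x ^ (n / 3) with hy
  have hyG : y ∈ G := pow_mem hx _
  have hy3 : y ^ 3 = 1 := by
    rw [hy, ← pow_mul, Nat.div_mul_cancel hdvd, hn]
    exact pow_orderOf_eq_one x
  have hyne : y ≠ 1 := by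
    intro h
    have hdd : n ∣ n / 3 := by
      rw [hn]; exact orderOf_dvd_of_pow_eq_one h
    have hlt : n / 3 < n := Nat.div_lt_self hnpos (by norm_num)
    have h3n : 3 ≤ n := Nat.le_of_dvd hnpos hdvd
    have := Nat.le_of_dvd (Nat.div_pos h3n (by norm_num)) hdd
    omega
  obtain ⟨e, hyd⟩ : ∃ e, (y : Matrix (Fin 3) (Fin 3) ℂ) = Matrix.diagonal e := by
    refine ⟨fun i => d i ^ (n / 3), ?_⟩
    rw [hy, Matrix.SpecialLinearGroup.coe_pow, hxd, Matrix.diagonal_pow]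
    rfl
  have he3 : ∀ i, e i ^ 3 = 1 := by
    intro i
    have h1 : ((y ^ 3 : Matrix.SpecialLinearGroup (Fin 3) ℂ) :
        Matrix (Fin 3) (Fin 3) ℂ) i i = 1 := by
      rw [hy3]; simp
    rw [Matrix.SpecialLinearGroup.coe_pow, hyd, Matrix.diagonal_pow] at h1
    simpa using h1
  have habc : e 0 * e 1 * e 2 = 1 := by
    have := y.prop
    rw [hyd, Matrix.det_diagonal, Fin.prod_univ_three] at this
    exact this
  -- conjugate of y by T
  set z := T3 * y * (T3 * T3) with hz
  have hzG : z ∈ G := mul_mem (mul_mem hT hyG) (mul_mem hT hT)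
  have hzd : (z : Matrix (Fin 3) (Fin 3) ℂ) = Matrix.diagonal ![e 1, e 2, e 0] := by
    rw [hz]
    simp only [Matrix.SpecialLinearGroup.coe_mul]
    rw [hyd]
    exact T3_conj_diag e
  -- w = y * z * z is scalar with ratio s
  set s : ℂ := e 0 * e 1 ^ 2 with hs
  have h12 : e 1 * e 2 ^ 2 = s := by
    rw [hs]; linear_combination (-(e 1 * e 2 ^ 2)) * habc + e 0 * e 1 ^ 2 * (he3 2)
  have h20 : e 2 * e 0 ^ 2 = s := by
    rw [hs]
    linear_combination (-(e 2 * e 0 ^ 2) * (e 0 * e 1 * e 2 + 1)) * habc +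
      e 0 * e 1 ^ 2 * e 2 ^ 3 * (he3 0) + e 0 * e 1 ^ 2 * (he3 2)
  have hs3 : s ^ 3 = 1 := by
    rw [hs]
    linear_combination e 1 ^ 6 * (he3 0) + (e 1 ^ 3 + 1) * (he3 1)
  set w := y * (z * z) with hw
  have hwG : w ∈ G := mul_mem hyG (mul_mem hzG hzG)
  have hwd : (w : Matrix (Fin 3) (Fin 3) ℂ) = s • 1 := by
    rw [hw]
    simp only [Matrix.SpecialLinearGroup.coe_mul]
    rw [hyd, hzd, Matrix.diagonal_mul_diagonal, Matrix.diagonal_mul_diagonal]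
    apply diag_eq_smul_one
    intro i
    fin_cases i <;> simp [Pi.mul_apply] <;>
      [skip; (exact (by linear_combination h12); ); (exact (by linear_combination h20))]
    · rw [hs]; ring
  -- produce a nontrivial scalar element of G
  have key : ∃ g ∈ G, ∃ t : ℂ, (g : Matrix (Fin 3) (Fin 3) ℂ) = t • 1 ∧ t ^ 3 = 1 ∧ t ≠ 1 := by
    by_cases hs1 : s = 1
    · have h01 : e 0 = e 1 := by
        have hs1' : e 0 * e 1 ^ 2 = 1 := by rw [← hs]; exact hs1
        linear_combination e 1 * hs1' - e 0 * (he3 1)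
      have h12' : e 1 = e 2 := by
        have h12'' : e 1 * e 2 ^ 2 = 1 := by rw [h12]; exact hs1
        linear_combination e 2 * h12'' - e 1 * (he3 2)
      have hee : ∀ i, e i = e 0 := by
        intro i
        fin_cases i
        · rfl
        · exact h01.symm
        · exact (h01.trans h12').symm
      have hsc : (y : Matrix (Fin 3) (Fin 3) ℂ) = e 0 • 1 := by
        rw [hyd]; exact diag_eq_smul_one e (e 0) hee
      refine ⟨y, hyG, e 0, hsc, he3 0, ?_⟩
      intro h1
      apply hyne
      apply Subtype.ext
      show (y : Matrix (Fin 3) (Fin 3) ℂ) = _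
      rw [hsc, h1, one_smul]
      rfl
    · exact ⟨w, hwG, s, hwd, hs3, hs1⟩
  obtain ⟨g, hgG, t, hgt, ht3, ht1⟩ := key
  rcases cube_root_cases t ht3 ht1 with h | h
  · apply hω
    have heq : ω3SL = g := by
      apply Subtype.ext
      show ω3 • (1 : Matrix (Fin 3) (Fin 3) ℂ) = _
      rw [hgt, h]
    rw [heq]; exact hgG
  · apply hω
    have heq : ω3SL = g * g := by
      apply Subtype.ext
      show ω3 • (1 : Matrix (Fin 3) (Fin 3) ℂ) = _
      simp only [Matrix.SpecialLinearGroup.coe_mul]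
      rw [hgt, h, Matrix.smul_mul, Matrix.mul_smul, Matrix.one_mul, smul_smul]
      congr 1
      linear_combination (-ω3) * ω3_pow_three
    rw [heq]; exact mul_mem hgG hgG

end
end

section
/- Let B ∈ ℂ be a nonzero element of finite multiplicative order m with gcd(m,3) = 1, and let M(B) be the matrix with rows (−1,0,0), (0,0,B⁻¹), (0,B,0). Then there exists a diagonal matrix t in the subgroup of SL(3,ℂ) generated by T and M(B) such that t·M(B) = R; one may take t = diag(1, −B, −B⁻¹). (Claim 'type D' of the paper's Lemma on exact sequences of SL(3) subgroups, with determinant-correct signs: if Z₃ is not contained in ⟨φ̃,T⟩ then some t ∈ ⟨T,φ̃⟩ satisfies t·φ̃ = R.) -/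
open Matrix

noncomputable section

/-- The matrix `R` with rows `(−1,0,0)`, `(0,0,−1)`, `(0,−1,0)`, as an element of
`SL(3, ℂ)`. -/
def RSL : Matrix.SpecialLinearGroup (Fin 3) ℂ :=
  ⟨!![-1, 0, 0; 0, 0, -1; 0, -1, 0], by simp [Matrix.det_fin_three]⟩

lemma exists_three_mul_modEq_one (n : ℕ) (hn : 0 < n) (h : Nat.Coprime n 3) :
    ∃ k, 3 * k ≡ 1 [MOD n] := by
  haveI : NeZero n := ⟨hn.ne'⟩
  have h3 : IsUnit ((3 : ℕ) : ZMod n) := (ZMod.isUnit_iff_coprime 3 n).mpr h.symm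
  refine ⟨(((3 : ℕ) : ZMod n)⁻¹).val, ?_⟩
  have : ((3 * (((3 : ℕ) : ZMod n)⁻¹).val : ℕ) : ZMod n) = ((1 : ℕ) : ZMod n) := by
    push_cast
    rw [ZMod.natCast_val, ZMod.cast_id]
    rw [ZMod.mul_inv_of_unit _ (by exact_mod_cast h3)]
  exact (ZMod.natCast_eq_natCast_iff _ _ _).mp this

lemma word_matrix_eq (B : ℂ) (hB : B ≠ 0) :
    (!![0,1,0;0,0,1;1,0,0] * !![-1,0,0;0,0,B⁻¹;0,B,0] * !![0,1,0;0,0,1;1,0,0]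
      * !![-1,0,0;0,0,B⁻¹;0,B,0] * !![0,1,0;0,0,1;1,0,0] * !![0,1,0;0,0,1;1,0,0]
      * !![-1,0,0;0,0,B⁻¹;0,B,0] * !![0,1,0;0,0,1;1,0,0] * !![0,1,0;0,0,1;1,0,0]
      * !![-1,0,0;0,0,B⁻¹;0,B,0] : Matrix (Fin 3) (Fin 3) ℂ)
    = !![1,0,0;0,(-B)^3,0;0,0,((-B)⁻¹)^3] := by
  have h1 : B * B⁻¹ = 1 := mul_inv_cancel₀ hB
  have h2 : B⁻¹ * B = 1 := inv_mul_cancel₀ hB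
  norm_num [Matrix.mul_fin_three, h1, h2]
  exact ⟨by ring, by ring⟩

/-- if `B ≠ 0` has finite multiplicative order `m` with `gcd(m,3) = 1`, and
`M(B) ∈ SL(3,ℂ)` is the matrix with rows `(−1,0,0)`, `(0,0,B⁻¹)`, `(0,B,0)`, then there is
a diagonal matrix `t` in the subgroup generated by `T` and `M(B)` with `t·M(B) = R`; one
may take `t = diag(1, −B, −B⁻¹)`. -/
theorem exists_diagonal_t_with_t_mul_M_eq_R
    (B : ℂ) (hB : B ≠ 0) (m : ℕ) (hm : orderOf B = m) (hmpos : 0 < m)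
    (hcop : Nat.Coprime m 3)
    (MB : Matrix.SpecialLinearGroup (Fin 3) ℂ)
    (hMB : (MB : Matrix (Fin 3) (Fin 3) ℂ) = !![-1, 0, 0; 0, 0, B⁻¹; 0, B, 0]) :
    ∃ t : Matrix.SpecialLinearGroup (Fin 3) ℂ,
      t ∈ Subgroup.closure {T3, MB} ∧
      (∀ i j, i ≠ j → (t : Matrix (Fin 3) (Fin 3) ℂ) i j = 0) ∧
      t * MB = RSL ∧
      (t : Matrix (Fin 3) (Fin 3) ℂ) = Matrix.diagonal ![1, -B, -B⁻¹] := by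
  have hC : (-B) ≠ 0 := neg_ne_zero.mpr hB
  set u : ℂˣ := Units.mk0 (-B) hC with hu
  have hBm : B ^ m = 1 := hm ▸ pow_orderOf_eq_one B
  have hval : (-B) ^ (2 * m) = 1 := by
    rw [pow_mul]
    have h2 : (-B) ^ 2 = B ^ 2 := by ring
    rw [h2, ← pow_mul, mul_comm, pow_mul, hBm, one_pow]
  have hu2m : u ^ (2 * m) = 1 := by
    ext
    simpa only [hu, Units.val_pow_eq_pow_val, Units.val_mk0, Units.val_one] using hval
  have hfin : IsOfFinOrder u :=
    isOfFinOrder_iff_pow_eq_one.mpr ⟨2 * m, by positivity, hu2m⟩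
  have hnpos : 0 < orderOf u := hfin.orderOf_pos
  have hdvd : orderOf u ∣ 2 * m := orderOf_dvd_of_pow_eq_one hu2m
  have hcop' : Nat.Coprime (orderOf u) 3 :=
    Nat.Coprime.coprime_dvd_left hdvd (Nat.Coprime.mul (by norm_num) hcop)
  obtain ⟨k, hk⟩ := exists_three_mul_modEq_one (orderOf u) hnpos hcop'
  have huk : u ^ (3 * k) = u ^ 1 := pow_eq_pow_iff_modEq.mpr hk
  have hCk : (-B) ^ (3 * k) = -B := by
    have h := congrArg (Units.val) huk
    simpa [hu] using h
  have hdiag : ∀ a b c : ℂ, Matrix.diagonal ![a, b, c] = !![a, 0, 0; 0, b, 0; 0, 0, c] := by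
    intro a b c
    ext i j
    fin_cases i <;> fin_cases j <;> simp [Matrix.diagonal, Matrix.vecHead, Matrix.vecTail]
  -- the diagonal word F = T M T M T T M T T M
  set F : Matrix.SpecialLinearGroup (Fin 3) ℂ :=
    T3 * MB * T3 * MB * T3 * T3 * MB * T3 * T3 * MB with hFdef
  have hF : (F : Matrix (Fin 3) (Fin 3) ℂ)
      = Matrix.diagonal ![1, (-B) ^ 3, ((-B)⁻¹) ^ 3] := by
    rw [hdiag, hFdef]
    simp only [Matrix.SpecialLinearGroup.coe_mul]
    rw [hMB, show ((T3 : Matrix.SpecialLinearGroup (Fin 3) ℂ) : Matrix (Fin 3) (Fin 3) ℂ)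
      = !![0,1,0;0,0,1;1,0,0] from rfl]
    exact word_matrix_eq B hB
  have hv : (![1, (-B) ^ 3, ((-B)⁻¹) ^ 3] : Fin 3 → ℂ) ^ k = ![1, -B, -B⁻¹] := by
    funext i
    fin_cases i
    · simp
    · show ((-B) ^ 3) ^ k = -B
      rw [← pow_mul]
      exact hCk
    · show (((-B)⁻¹) ^ 3) ^ k = -B⁻¹
      rw [← pow_mul, inv_pow, hCk, inv_neg]
  have ht : ((F ^ k : Matrix.SpecialLinearGroup (Fin 3) ℂ) : Matrix (Fin 3) (Fin 3) ℂ)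
      = Matrix.diagonal ![1, -B, -B⁻¹] := by
    have hpow : ((F ^ k : Matrix.SpecialLinearGroup (Fin 3) ℂ) : Matrix (Fin 3) (Fin 3) ℂ)
        = (F : Matrix (Fin 3) (Fin 3) ℂ) ^ k := by simp
    rw [hpow, hF, Matrix.diagonal_pow, hv]
  refine ⟨F ^ k, ?_, ?_, ?_, ht⟩
  · have hT : T3 ∈ Subgroup.closure ({T3, MB} : Set (Matrix.SpecialLinearGroup (Fin 3) ℂ)) :=
      Subgroup.subset_closure (by simp)
    have hM : MB ∈ Subgroup.closure ({T3, MB} : Set (Matrix.SpecialLinearGroup (Fin 3) ℂ)) :=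
      Subgroup.subset_closure (by simp)
    exact pow_mem (by
      rw [hFdef]
      exact mul_mem (mul_mem (mul_mem (mul_mem (mul_mem (mul_mem (mul_mem (mul_mem
        (mul_mem hT hM) hT) hM) hT) hT) hM) hT) hT) hM) k
  · intro i j hij
    rw [ht]
    exact Matrix.diagonal_apply_ne _ hij
  · apply Matrix.SpecialLinearGroup.ext
    intro i j
    have hcoe : ((F ^ k * MB : Matrix.SpecialLinearGroup (Fin 3) ℂ)
        : Matrix (Fin 3) (Fin 3) ℂ) = Matrix.diagonal ![1, -B, -B⁻¹] * (MB : Matrix (Fin 3) (Fin 3) ℂ) := by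
      rw [← ht]; simp
    have hBB : B * B⁻¹ = 1 := mul_inv_cancel₀ hB
    have hBB' : B⁻¹ * B = 1 := inv_mul_cancel₀ hB
    show ((F ^ k * MB : Matrix.SpecialLinearGroup (Fin 3) ℂ)
        : Matrix (Fin 3) (Fin 3) ℂ) i j = (RSL : Matrix (Fin 3) (Fin 3) ℂ) i j
    rw [hcoe, hMB, hdiag]
    fin_cases i <;> fin_cases j <;>
      simp [RSL, Matrix.mul_apply, Fin.sum_univ_three, hBB, hBB', Matrix.vecHead, Matrix.vecTail]

end
end

section
/- Let r ≥ 1 and let ζ ∈ ℂ be a primitive r-th root of unity. Let g₁, g₂ ∈ SL(2,ℂ) satisfy g₁ʳ = 1 and g₂ʳ = 1, and suppose there exist natural numbers a₁, a₂, a₃, a₄, each strictly less than r, with a₁+a₂+a₃+a₄ = r, such that the characteristic polynomial of g₁ is (X − ζ^{a₁})(X − ζ^{a₂}) and the characteristic polynomial of g₂ is (X − ζ^{a₃})(X − ζ^{a₄}). Then g₁ = 1 or g₂ = 1. (This is the core of the paper's Lemma on groups of type (2,2): an element of weight one in a finite subgroup of SL(2)×SL(2) ⊂ SL(4) has one of its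 two diagonal blocks equal to the identity, so if both generic stabilizers are trivial the quotient ℂ⁴/G is terminal.) -/
open Polynomial

noncomputable section

lemma aux_unipotent_root (r : ℕ) (hr : 1 ≤ r)
    (g : Matrix.SpecialLinearGroup (Fin 2) ℂ) (hg : g ^ r = 1)
    (hc : (g : Matrix (Fin 2) (Fin 2) ℂ).charpoly =
      (X - C 1) * (X - C 1)) : g = 1 := by
  have hch := Matrix.aeval_self_charpoly (g : Matrix (Fin 2) (Fin 2) ℂ)
  rw [hc] at hch
  simp only [map_mul, map_sub, aeval_X, aeval_C, map_one] at hch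
  obtain ⟨N, hch, hgN⟩ : ∃ N : Matrix (Fin 2) (Fin 2) ℂ,
      N * N = 0 ∧ (g : Matrix (Fin 2) (Fin 2) ℂ) = 1 + N :=
    ⟨(g : Matrix (Fin 2) (Fin 2) ℂ) - 1, hch, by abel⟩
  have hpow : ∀ k : ℕ, ((1 : Matrix (Fin 2) (Fin 2) ℂ) + N) ^ k = 1 + (k : ℂ) • N := by
    intro k
    induction k with
    | zero => simp
    | succ k ih =>
      rw [pow_succ, ih]
      push_cast
      rw [mul_add, add_mul, add_mul, one_mul, mul_one, smul_mul_assoc, hch,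
        smul_zero]
      rw [add_smul, one_smul, one_mul, add_assoc, add_zero]
  have hcoe : ((g : Matrix (Fin 2) (Fin 2) ℂ)) ^ r = 1 := by
    have := congrArg (fun h : Matrix.SpecialLinearGroup (Fin 2) ℂ =>
      (h : Matrix (Fin 2) (Fin 2) ℂ)) hg
    simpa using this
  rw [hgN, hpow r] at hcoe
  have hNz : N = 0 := by
    have : (r : ℂ) • N = 0 := by
      have := hcoe
      rwa [add_eq_left] at this
    rcases smul_eq_zero.mp this with h | h
    · exfalso
      have : (r : ℂ) ≠ 0 := Nat.cast_ne_zero.mpr (by omega)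
      exact this h
    · exact h
  apply Subtype.ext
  rw [hgN, hNz, add_zero]
  rfl

/-- if `g₁, g₂ ∈ SL(2,ℂ)` satisfy `g₁ʳ = g₂ʳ = 1` and their characteristic
polynomials are `(X − ζ^{a₁})(X − ζ^{a₂})` and `(X − ζ^{a₃})(X − ζ^{a₄})` for a primitive
`r`-th root of unity `ζ` and natural numbers `a₁,…,a₄ < r` with `a₁+a₂+a₃+a₄ = r`, then
`g₁ = 1` or `g₂ = 1`. -/
theorem block_of_weight_one_element_is_identity
    (r : ℕ) (hr : 1 ≤ r) (ζ : ℂ) (hζ : IsPrimitiveRoot ζ r)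
    (g₁ g₂ : Matrix.SpecialLinearGroup (Fin 2) ℂ)
    (hg₁ : g₁ ^ r = 1) (hg₂ : g₂ ^ r = 1)
    (a₁ a₂ a₃ a₄ : ℕ)
    (ha₁ : a₁ < r) (ha₂ : a₂ < r) (ha₃ : a₃ < r) (ha₄ : a₄ < r)
    (hsum : a₁ + a₂ + a₃ + a₄ = r)
    (hc₁ : (g₁ : Matrix (Fin 2) (Fin 2) ℂ).charpoly =
      (X - C (ζ ^ a₁)) * (X - C (ζ ^ a₂)))
    (hc₂ : (g₂ : Matrix (Fin 2) (Fin 2) ℂ).charpoly =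
      (X - C (ζ ^ a₃)) * (X - C (ζ ^ a₄))) :
    g₁ = 1 ∨ g₂ = 1 := by
  -- determinant of g₁ is the constant coefficient of the charpoly (n = 2)
  have hdet : (g₁ : Matrix (Fin 2) (Fin 2) ℂ).det = ζ ^ (a₁ + a₂) := by
    rw [Matrix.det_eq_sign_charpoly_coeff, hc₁]
    rw [coeff_zero_eq_eval_zero]
    simp [pow_add]
  have hone : ζ ^ (a₁ + a₂) = 1 := by
    rw [← hdet]; exact g₁.2
  have hdvd : r ∣ a₁ + a₂ := hζ.dvd_of_pow_eq_one _ hone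
  rcases Nat.lt_or_ge (a₁ + a₂) r with h | h
  · -- a₁ + a₂ = 0
    have h0 : a₁ + a₂ = 0 := Nat.eq_zero_of_dvd_of_lt hdvd h
    left
    apply aux_unipotent_root r hr g₁ hg₁
    have h1 : a₁ = 0 := by omega
    have h2 : a₂ = 0 := by omega
    rw [hc₁, h1, h2, pow_zero]
  · -- a₃ + a₄ = 0
    have h0 : a₃ + a₄ = 0 := by omega
    right
    apply aux_unipotent_root r hr g₂ hg₂
    have h3 : a₃ = 0 := by omega
    have h4 : a₄ = 0 := by omega
    rw [hc₂, h3, h4, pow_zero]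

end
end
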